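/- Let n and m be natural numbers. The number of maximal chains of the product poset (Fin n → Fin (m+1)) with the pointwise order, multiplied by (m!)^n, equals (m·n)!. That is, the number of maximal chains of the n-fold power of the (m+1)-element chain is (mn)!/(m!)^n. -/

import Mathlib

/-!
A maximal chain of the finite bounded poset `∀ i, Fin (m i + 1)` is a chain
`⊥ = c 0 ⋖ c 1 ⋖ ⋯ ⋖ c N = ⊤`, and the rank `a ↦ ∑ i, a i` forces `N = ∑ i, m i`. Each cover
raises exactly one coordinate by one, so such a chain is the same as the word `w : Fin N → ι`
recording which coordinate is raised at each step, and these are exactly the words in which every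
letter `i` occurs `m i` times. The permutations of `Fin N` act transitively on these words by
precomposition, with stabilizer `∏ i, Perm (w ⁻¹' {i})`, so there are `N! / ∏ i, (m i)!` of them.
-/

open Finset Nat

@[ext]
structure CovByPath (α : Type*) [PartialOrder α] [BoundedOrder α] (N : ℕ) where
  toFun : Fin (N + 1) → α
  map_zero : toFun 0 = ⊥
  map_last : toFun (Fin.last N) = ⊤
  covBy : ∀ k : Fin N, toFun k.castSucc ⋖ toFun k.succ

section MaxChain

variable {α : Type*} [PartialOrder α] [BoundedOrder α] {N : ℕ}

namespace CovByPath

lemma strictMono (c : CovByPath α N) : StrictMono c.toFun :=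
  Fin.strictMono_iff_lt_succ.2 fun k => (c.covBy k).lt

lemma isMaxChain_range (c : CovByPath α N) : IsMaxChain (· ≤ ·) (Set.range c.toFun) :=
  .range_fin_of_covBy c.map_zero c.map_last fun k => (c.covBy k).wcovBy

lemma range_injective : Function.Injective fun c : CovByPath α N => Set.range c.toFun :=
  fun c d h => CovByPath.ext ((c.strictMono.range_inj d.strictMono).1 h)

lemma apply_eq_add_of_covBy (c : CovByPath α N) (r : α → ℕ)
    (hr : ∀ ⦃a b⦄, a ⋖ b → r b = r a + 1) (k : Fin (N + 1)) : r (c.toFun k) = r ⊥ + k := by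
  induction k using Fin.induction with
  | zero => simp [c.map_zero]
  | succ k ih => rw [hr (c.covBy k), ih, Fin.val_succ, Fin.val_castSucc, add_assoc]

lemma length_eq (c : CovByPath α N) (r : α → ℕ) (hr : ∀ ⦃a b⦄, a ⋖ b → r b = r a + 1) :
    r ⊥ + N = r ⊤ := by
  simpa [c.map_last] using (c.apply_eq_add_of_covBy r hr (Fin.last N)).symm

end CovByPath

lemma IsMaxChain.exists_covByPath [Finite α] {C : Set α} (hC : IsMaxChain (· ≤ ·) C) :
    ∃ N, ∃ c : CovByPath α N, Set.range c.toFun = C := by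
  classical
  let s := Flag.ofIsMaxChain C hC
  have : Fintype s := Fintype.ofFinite s
  obtain ⟨N, hN⟩ := Nat.exists_eq_add_one.2 (Fintype.card_pos (α := s))
  let e := Fintype.orderIsoFinOfCardEq s hN
  refine ⟨N, ⟨fun k => e k, ?_, ?_, fun k => ?_⟩, ?_⟩
  · rw [← bot_eq_zero, e.map_bot]
    rfl
  · rw [← Fin.top_eq_last, e.map_top]
    rfl
  · exact Flag.coe_covBy_coe.2 ((apply_covBy_apply_iff e).2 (by simp [Fin.covBy_iff]))
  · change Set.range (Subtype.val ∘ e) = C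
    rw [Set.range_comp, e.range_eq, Set.image_univ, Subtype.range_coe]
    rfl

theorem card_isMaxChain_eq_card_covByPath [Finite α] (r : α → ℕ)
    (hr : ∀ ⦃a b⦄, a ⋖ b → r b = r a + 1) (hN : r ⊥ + N = r ⊤) :
    Nat.card {C : Set α // IsMaxChain (· ≤ ·) C} = Nat.card (CovByPath α N) := by
  refine (Nat.card_eq_of_bijective (fun c => ⟨_, c.isMaxChain_range⟩) ⟨?_, ?_⟩).symm
  · exact fun c d h => CovByPath.range_injective (congrArg Subtype.val h)
  · rintro ⟨C, hC⟩
    obtain ⟨N', c, hc⟩ := hC.exists_covByPath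
    obtain rfl : N' = N := by have := c.length_eq r hr; omega
    exact ⟨c, Subtype.ext hc⟩

end MaxChain

section WordCount

variable {α ι : Type*} [Fintype α] [DecidableEq ι]

lemma exists_card_fiber_eq [Fintype ι] (k : ι → ℕ) (hk : ∑ i, k i = Fintype.card α) :
    ∃ f : α → ι, ∀ i, #{a | f a = i} = k i := by
  let e : α ≃ Σ i, Fin (k i) := Fintype.equivOfCardEq (by simp [hk])
  refine ⟨fun a => (e a).1, fun i => ?_⟩
  rw [← Fintype.card_subtype, ← Fintype.card_fin (k i),
    Fintype.card_congr ((e.subtypeEquiv fun _ => Iff.rfl).trans (Equiv.sigmaSubtype i))]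

lemma card_fiber_comp_perm (f : α → ι) (σ : Equiv.Perm α) (i : ι) :
    #{a | f (σ a) = i} = #{a | f a = i} := by
  simp only [← Fintype.card_subtype]
  exact Fintype.card_congr (σ.subtypeEquiv fun _ => Iff.rfl)

lemma orbit_domMulAct_perm_eq (f : α → ι) :
    MulAction.orbit (Equiv.Perm α)ᵈᵐᵃ f = {g | ∀ i, #{a | g a = i} = #{a | f a = i}} := by
  ext g
  constructor
  · rintro ⟨σ, rfl⟩ i
    exact card_fiber_comp_perm f _ i
  · intro hg
    have e : ∀ i, {a // g a = i} ≃ {a // f a = i} := fun i =>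
      Fintype.equivOfCardEq (by simpa only [Fintype.card_subtype] using hg i)
    exact ⟨DomMulAct.mk (Equiv.ofFiberEquiv e), funext (Equiv.ofFiberEquiv_map e)⟩

theorem card_fun_card_fiber_mul_prod_factorial [DecidableEq α] [Fintype ι] (k : ι → ℕ)
    (hk : ∑ i, k i = Fintype.card α) :
    Nat.card {w : α → ι // ∀ i, #{a | w a = i} = k i} * ∏ i, (k i)! = (Fintype.card α)! := by
  obtain ⟨f, hf⟩ := exists_card_fiber_eq k hk
  have horbit : Nat.card (MulAction.orbit (Equiv.Perm α)ᵈᵐᵃ f)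
      = Nat.card {w : α → ι // ∀ i, #{a | w a = i} = k i} := by
    rw [orbit_domMulAct_perm_eq]
    simp only [hf]
    rfl
  have hstab : Nat.card (MulAction.stabilizer (Equiv.Perm α)ᵈᵐᵃ f) = ∏ i, (k i)! := by
    have e : {σ : Equiv.Perm α // f ∘ σ = f} ≃ MulAction.stabilizer (Equiv.Perm α)ᵈᵐᵃ f :=
      DomMulAct.mk.subtypeEquiv fun _ => DomMulAct.mem_stabilizer_iff.symm
    rw [← Nat.card_congr e, Nat.card_eq_fintype_card, DomMulAct.stabilizer_card]
    simp only [Fintype.card_subtype, hf]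
  rw [← horbit, ← hstab, Nat.card_coe_set_eq, mul_comm, ← MulAction.index_stabilizer,
    Subgroup.card_mul_index, Nat.card_congr DomMulAct.mk.symm, Nat.card_perm,
    Nat.card_eq_fintype_card]

end WordCount

section PiFin

variable {ι : Type*} {m : ι → ℕ} {N : ℕ}

lemma sum_val_eq_add_one_of_covBy [Fintype ι] [DecidableEq ι] {a b : ∀ i, Fin (m i + 1)}
    (h : a ⋖ b) : ∑ i, (b i : ℕ) = ∑ i, (a i : ℕ) + 1 := by
  obtain ⟨i, hi, hrest⟩ := Pi.covBy_iff.1 h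
  rw [Fin.covBy_iff, Nat.covBy_iff_add_one_eq] at hi
  rw [← add_sum_erase _ _ (mem_univ i), ← add_sum_erase _ _ (mem_univ i), ← hi,
    sum_congr rfl fun j hj => congrArg Fin.val (hrest j (ne_of_mem_erase hj)).symm]
  ring

namespace CovByPath

variable (c : CovByPath (∀ i, Fin (m i + 1)) N)

noncomputable def word (k : Fin N) : ι := (Pi.covBy_iff.1 (c.covBy k)).choose

lemma word_spec (k : Fin N) : c.toFun k.castSucc (c.word k) ⋖ c.toFun k.succ (c.word k) ∧
    ∀ j ≠ c.word k, c.toFun k.castSucc j = c.toFun k.succ j :=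
  (Pi.covBy_iff.1 (c.covBy k)).choose_spec

end CovByPath

variable [DecidableEq ι]

def prefixCount (w : Fin N → ι) (k : Fin (N + 1)) (i : ι) : ℕ :=
  #{j | j.castSucc < k ∧ w j = i}

lemma prefixCount_zero (w : Fin N → ι) (i : ι) : prefixCount w 0 i = 0 := by
  simp [prefixCount]

lemma prefixCount_last (w : Fin N → ι) (i : ι) :
    prefixCount w (Fin.last N) i = #{j | w j = i} := by
  simp [prefixCount, Fin.castSucc_lt_last]

lemma prefixCount_le (w : Fin N → ι) (k : Fin (N + 1)) (i : ι) :
    prefixCount w k i ≤ #{j | w j = i} :=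
  card_le_card fun j hj => by
    simp only [mem_filter] at hj ⊢
    exact ⟨hj.1, hj.2.2⟩

lemma prefixCount_succ (w : Fin N → ι) (k : Fin N) (i : ι) :
    prefixCount w k.succ i = prefixCount w k.castSucc i + if w k = i then 1 else 0 := by
  have hle : prefixCount w k.succ i = #{j ∈ Iic k | w j = i} := by
    simp only [prefixCount, Fin.castSucc_lt_succ_iff]
    congr 1; ext j; simp
  have hlt : prefixCount w k.castSucc i = #{j ∈ Iio k | w j = i} := by
    simp only [prefixCount, Fin.castSucc_lt_castSucc_iff]
    congr 1; ext j; simp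
  rw [hle, hlt, ← Iio_insert, filter_insert]
  split_ifs
  · exact card_insert_of_notMem (by simp)
  · rfl

namespace CovByPath

variable (c : CovByPath (∀ i, Fin (m i + 1)) N)

lemma val_apply_eq_prefixCount (k : Fin (N + 1)) (i : ι) :
    (c.toFun k i : ℕ) = prefixCount c.word k i := by
  induction k using Fin.induction with
  | zero => simp [c.map_zero, prefixCount_zero, bot_eq_zero]
  | succ k ih =>
    obtain ⟨hcov, hrest⟩ := c.word_spec k
    rw [prefixCount_succ, ← ih]
    split_ifs with h
    · subst h
      exact (Nat.covBy_iff_add_one_eq.1 (Fin.covBy_iff.1 hcov)).symm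
    · rw [hrest i (Ne.symm h), add_zero]

lemma card_word_fiber (i : ι) : #{k | c.word k = i} = m i := by
  rw [← prefixCount_last, ← val_apply_eq_prefixCount, c.map_last]
  simp

def ofWord (w : Fin N → ι) (hw : ∀ i, #{k | w k = i} = m i) :
    CovByPath (∀ i, Fin (m i + 1)) N where
  toFun k i := ⟨prefixCount w k i, Nat.lt_succ_of_le (hw i ▸ prefixCount_le w k i)⟩
  map_zero := by ext; simp [prefixCount_zero, bot_eq_zero]
  map_last := by ext; simp [prefixCount_last, hw]
  covBy k := Pi.covBy_iff.2 ⟨w k, by simp [Fin.covBy_iff, prefixCount_succ],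
    fun j hj => by ext; simp [prefixCount_succ, Ne.symm hj]⟩

lemma word_ofWord (w : Fin N → ι) (hw : ∀ i, #{k | w k = i} = m i) :
    (ofWord w hw).word = w := by
  funext k
  by_contra h
  have := congrArg Fin.val (((ofWord w hw).word_spec k).2 (w k) (Ne.symm h))
  simp [ofWord, prefixCount_succ] at this

end CovByPath

theorem card_covByPath_pi_fin : Nat.card (CovByPath (∀ i, Fin (m i + 1)) N)
    = Nat.card {w : Fin N → ι // ∀ i, #{k | w k = i} = m i} := by
  refine Nat.card_eq_of_bijective (fun c => ⟨c.word, c.card_word_fiber⟩)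
    ⟨fun c d h => ?_, fun w => ⟨.ofWord w.1 w.2, Subtype.ext (CovByPath.word_ofWord w.1 w.2)⟩⟩
  have hword : c.word = d.word := congrArg Subtype.val h
  ext k i
  rw [c.val_apply_eq_prefixCount, d.val_apply_eq_prefixCount, hword]

theorem card_isMaxChain_pi_fin_mul_prod_factorial [Fintype ι] (m : ι → ℕ) :
    Nat.card {C : Set (∀ i, Fin (m i + 1)) // IsMaxChain (· ≤ ·) C} * ∏ i, (m i)!
      = (∑ i, m i)! := by
  have hN : ∑ i, ((⊥ : ∀ i, Fin (m i + 1)) i : ℕ) + ∑ i, m i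
      = ∑ i, ((⊤ : ∀ i, Fin (m i + 1)) i : ℕ) := by
    simp [bot_eq_zero]
  rw [card_isMaxChain_eq_card_covByPath _ (fun _ _ => sum_val_eq_add_one_of_covBy) hN,
    card_covByPath_pi_fin]
  simpa using card_fun_card_fiber_mul_prod_factorial (α := Fin (∑ i, m i)) m (by simp)

end PiFin

/-- The number of maximal chains of the `n`-fold power of the `(m+1)`-element chain,
i.e. of `Fin n → Fin (m+1)` with the pointwise order, is `(mn)!/(m!)^n`. -/
theorem stmt_7 (n m : ℕ) :
    Nat.card {C : Set (Fin n → Fin (m + 1)) // IsMaxChain (· ≤ ·) C}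
      * Nat.factorial m ^ n = Nat.factorial (m * n) := by
  simpa [mul_comm] using card_isMaxChain_pi_fin_mul_prod_factorial fun _ : Fin n => m
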